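/- The set R = { B ∈ S^n : v^T B v ≥ 1 for all v ∈ ℤ^n_{≥0} \ {0} } is contained in the interior of the copositive cone COP^n. -/
import Mathlib


open Matrix

/-- The quadratic form `B[x] = xᵀ B x`. -/
def quadForm {n : ℕ} (B : Matrix (Fin n) (Fin n) ℝ) (x : Fin n → ℝ) : ℝ :=
  x ⬝ᵥ B.mulVec x

namespace RyshkovAux

variable {n : ℕ}

lemma dot_symm (B : Matrix (Fin n) (Fin n) ℝ) (hB : B.IsSymm) (x y : Fin n → ℝ) :
    x ⬝ᵥ B.mulVec y = (B.mulVec x) ⬝ᵥ y := by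
  rw [Matrix.dotProduct_mulVec, ← Matrix.mulVec_transpose, hB.eq]

lemma decomp (B : Matrix (Fin n) (Fin n) ℝ) (hB : B.IsSymm) (x e : Fin n → ℝ) (c : ℝ) :
    quadForm B (c • x + e)
      = c ^ 2 * quadForm B x + 2 * c * ((B.mulVec x) ⬝ᵥ e) + quadForm B e := by
  simp only [quadForm, Matrix.mulVec_add, Matrix.mulVec_smul, dotProduct_add,
    add_dotProduct, dotProduct_smul, smul_dotProduct, smul_eq_mul]
  rw [dot_symm B hB x e, dotProduct_comm e (B.mulVec x)]
  ring

lemma dot_bound (w e : Fin n → ℝ) (ε : ℝ) (he : ∀ i, |e i| ≤ ε) :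
    |w ⬝ᵥ e| ≤ (∑ i, |w i|) * ε := by
  simp only [dotProduct]
  rw [Finset.sum_mul]
  calc |∑ i, w i * e i| ≤ ∑ i, |w i * e i| := Finset.abs_sum_le_sum_abs _ _
    _ ≤ ∑ i, |w i| * ε := by
        refine Finset.sum_le_sum fun i _ => ?_
        rw [abs_mul]
        exact mul_le_mul_of_nonneg_left (he i) (abs_nonneg _)

lemma quad_bound (B : Matrix (Fin n) (Fin n) ℝ) (e : Fin n → ℝ) (ε : ℝ)
    (hε : 0 ≤ ε) (he : ∀ i, |e i| ≤ ε) :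
    |quadForm B e| ≤ (∑ i, ∑ j, |B i j|) * ε ^ 2 := by
  have h : quadForm B e = ∑ i, ∑ j, e i * (B i j * e j) := by
    simp [quadForm, dotProduct, Matrix.mulVec, Finset.mul_sum]
  rw [h, Finset.sum_mul]
  calc |∑ i, ∑ j, e i * (B i j * e j)| ≤ ∑ i, |∑ j, e i * (B i j * e j)| :=
        Finset.abs_sum_le_sum_abs _ _
    _ ≤ ∑ i, ∑ j, |e i * (B i j * e j)| :=
        Finset.sum_le_sum fun i _ => Finset.abs_sum_le_sum_abs _ _
    _ ≤ ∑ i, (∑ j, |B i j|) * ε ^ 2 := by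
        refine Finset.sum_le_sum fun i _ => ?_
        rw [Finset.sum_mul]
        refine Finset.sum_le_sum fun j _ => ?_
        rw [abs_mul, abs_mul]
        calc |e i| * (|B i j| * |e j|)
            ≤ ε * (|B i j| * ε) :=
              mul_le_mul (he i) (mul_le_mul_of_nonneg_left (he j) (abs_nonneg _))
                (by positivity) hε
          _ = |B i j| * ε ^ 2 := by ring

lemma nonneg (B : Matrix (Fin n) (Fin n) ℝ) (hB : B.IsSymm)
    (hR : ∀ v : Fin n → ℤ, (∀ i, 0 ≤ v i) → v ≠ 0 →
      1 ≤ quadForm B (fun i => (v i : ℝ)))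
    (x : Fin n → ℝ) (hx : ∀ i, 0 ≤ x i) : 0 ≤ quadForm B x := by
  by_contra hneg
  push_neg at hneg
  have hxne : ∃ j, 0 < x j := by
    by_contra h
    push_neg at h
    have hx0 : x = 0 := funext fun i => le_antisymm (h i) (hx i)
    rw [hx0] at hneg
    simp [quadForm] at hneg
  obtain ⟨j, hj⟩ := hxne
  set C1 := ∑ i, |(B.mulVec x) i| with hC1def
  set C2 := ∑ i, ∑ k, |B i k| with hC2def
  have hC1 : 0 ≤ C1 := Finset.sum_nonneg fun _ _ => abs_nonneg _
  have hC2 : 0 ≤ C2 :=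
    Finset.sum_nonneg fun _ _ => Finset.sum_nonneg fun _ _ => abs_nonneg _
  set a := -quadForm B x with ha
  have ha0 : 0 < a := by simp [ha]; linarith
  obtain ⟨t, ht⟩ := exists_nat_gt (max ((2 * C1 + C2 + 1) / a) (max (1 / x j) 1))
  have ht1 : (2 * C1 + C2 + 1) / a < t := lt_of_le_of_lt (le_max_left _ _) ht
  have ht2 : 1 / x j < t :=
    lt_of_le_of_lt (le_trans (le_max_left _ _) (le_max_right _ _)) ht
  have ht3 : (1 : ℝ) ≤ t :=
    le_of_lt (lt_of_le_of_lt (le_trans (le_max_right _ _) (le_max_right _ _)) ht)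
  have htpos : (0 : ℝ) < t := by linarith
  set v : Fin n → ℤ := fun i => ⌊(t : ℝ) * x i⌋ with hvdef
  have hv0 : ∀ i, 0 ≤ v i := fun i =>
    Int.floor_nonneg.mpr (mul_nonneg htpos.le (hx i))
  have htxj : 1 ≤ (t : ℝ) * x j := by
    rw [div_lt_iff₀ hj] at ht2
    linarith
  have hvj : 1 ≤ v j := Int.le_floor.mpr (by exact_mod_cast htxj)
  have hvne : v ≠ 0 := by
    intro h
    have := congrFun h j
    simp at this
    omega
  set e : Fin n → ℝ := fun i => (v i : ℝ) - (t : ℝ) * x i with hedef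
  have he : ∀ i, |e i| ≤ 1 := by
    intro i
    rw [abs_le]
    constructor
    · have := Int.sub_one_lt_floor ((t : ℝ) * x i)
      simp only [hedef]
      push_cast
      linarith
    · have := Int.floor_le ((t : ℝ) * x i)
      simp only [hedef]
      push_cast
      linarith
  have hveq : (fun i => (v i : ℝ)) = (t : ℝ) • x + e := by
    funext i
    simp [hedef, smul_eq_mul]
  have hF : |(B.mulVec x) ⬝ᵥ e| ≤ C1 * 1 := dot_bound _ _ 1 he
  have hQe : |quadForm B e| ≤ C2 * 1 ^ 2 := quad_bound B e 1 zero_le_one he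
  have hRv := hR v hv0 hvne
  rw [hveq, decomp B hB x e (t : ℝ)] at hRv
  have hQx : quadForm B x = -a := by simp [ha]
  rw [hQx] at hRv
  have habs1 : (B.mulVec x) ⬝ᵥ e ≤ C1 := by
    have := abs_le.mp hF; linarith [this.2]
  have habs2 : quadForm B e ≤ C2 := by
    have := abs_le.mp hQe; nlinarith [this.2]
  have hta : 2 * C1 + C2 + 1 < (t : ℝ) * a := by
    rw [div_lt_iff₀ ha0] at ht1
    linarith
  nlinarith [mul_le_mul_of_nonneg_left hta.le (le_of_lt htpos),
    mul_pos htpos ha0]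

lemma abs_sub_lt_one_of_floor_eq {p q : ℝ} (h : ⌊p⌋ = ⌊q⌋) : |p - q| < 1 := by
  have h1 := Int.floor_le p
  have h2 := Int.lt_floor_add_one p
  have h3 := Int.floor_le q
  have h4 := Int.lt_floor_add_one q
  rw [h] at h1 h2
  rw [abs_sub_lt_iff]
  constructor <;> linarith

end RyshkovAux

theorem ryshkov_subset_interior_cop {n : ℕ}
    (B : Matrix (Fin n) (Fin n) ℝ) (hB : B.IsSymm)
    (hR : ∀ v : Fin n → ℤ, (∀ i, 0 ≤ v i) → v ≠ 0 →
      1 ≤ quadForm B (fun i => (v i : ℝ))) :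
    ∀ x : Fin n → ℝ, (∀ i, 0 ≤ x i) → x ≠ 0 → 0 < quadForm B x := by
  intro x hx hxne
  have h0 := RyshkovAux.nonneg B hB hR x hx
  rcases h0.lt_or_eq with hlt | heq
  · exact hlt
  exfalso
  have hQ : quadForm B x = 0 := heq.symm
  obtain ⟨j, hj⟩ : ∃ j, 0 < x j := by
    by_contra h
    push_neg at h
    exact hxne (funext fun i => le_antisymm (h i) (hx i))
  -- B x vanishes on the support of x
  have hBx : ∀ i, 0 < x i → (B.mulVec x) i = 0 := by
    intro i hi
    by_contra hc
    set c := (B.mulVec x) i with hcdef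
    set δ := min (x i / |c|) (1 / (|B i i| + 1)) with hδdef
    have hcpos : 0 < |c| := abs_pos.mpr hc
    have hδ : 0 < δ := lt_min (div_pos hi hcpos) (by positivity)
    have hδ1 : δ * |c| ≤ x i := by
      have : δ ≤ x i / |c| := min_le_left _ _
      rw [le_div_iff₀ hcpos] at this
      linarith
    have hδ2 : δ * |B i i| < 2 := by
      have h1 : δ ≤ 1 / (|B i i| + 1) := min_le_right _ _
      have h2 : (0:ℝ) < |B i i| + 1 := by positivity
      rw [le_div_iff₀ h2] at h1
      nlinarith [abs_nonneg (B i i), hδ]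
    set s := -(c * δ) with hsdef
    set y := x + s • (Pi.single i (1:ℝ) : Fin n → ℝ) with hydef
    have hy : ∀ k, 0 ≤ y k := by
      intro k
      by_cases hk : k = i
      · subst hk
        simp only [hydef, Pi.add_apply, Pi.smul_apply, Pi.single_eq_same, smul_eq_mul,
          mul_one, hsdef]
        have : c * δ ≤ |c| * δ := by
          nlinarith [le_abs_self c, hδ.le]
        nlinarith
      · simp only [hydef, Pi.add_apply, Pi.smul_apply, Pi.single_eq_of_ne hk,
          smul_eq_mul, mul_zero, add_zero]
        exact hx k
    have hyQ := RyshkovAux.nonneg B hB hR y hy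
    have hyeq : y = s • (Pi.single i (1:ℝ) : Fin n → ℝ) + x := by
      rw [hydef]; abel
    rw [hyeq, RyshkovAux.decomp B hB _ x s] at hyQ
    have hone : B.mulVec (Pi.single i (1:ℝ)) = fun k => B k i := by
      funext k
      simp [Matrix.mulVec, dotProduct, Pi.single_apply]
    have hquadu : quadForm B (Pi.single i (1:ℝ)) = B i i := by
      simp [quadForm, hone, dotProduct, Pi.single_apply]
    have hdot : (B.mulVec (Pi.single i (1:ℝ))) ⬝ᵥ x = c := by
      rw [hone, hcdef]
      simp only [dotProduct, Matrix.mulVec, dotProduct]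
      exact Finset.sum_congr rfl fun k _ => by rw [hB.apply i k]
    rw [hquadu, hdot, hQ] at hyQ
    rw [hsdef] at hyQ
    have hBabs : B i i ≤ |B i i| := le_abs_self _
    have h5 : δ * B i i < 2 :=
      lt_of_le_of_lt (mul_le_mul_of_nonneg_left hBabs hδ.le) hδ2
    have hc2 : 0 < c ^ 2 * δ := by positivity
    have hkey : (-(c * δ)) ^ 2 * B i i + 2 * (-(c * δ)) * c + 0
        = c ^ 2 * δ * (δ * B i i - 2) := by ring
    rw [hkey] at hyQ
    have : c ^ 2 * δ * (δ * B i i - 2) < 0 :=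
      mul_neg_of_pos_of_neg hc2 (by linarith)
    linarith
  -- pigeonhole: find two multiples with close fractional parts
  set C2 := ∑ p, ∑ q, |B p q| with hC2def
  have hC2 : 0 ≤ C2 :=
    Finset.sum_nonneg fun _ _ => Finset.sum_nonneg fun _ _ => abs_nonneg _
  obtain ⟨K, hK⟩ := exists_nat_gt (max C2 (max (1 / x j) 1))
  have hKC2 : C2 < K := lt_of_le_of_lt (le_max_left _ _) hK
  have hKxj : 1 / x j < K :=
    lt_of_le_of_lt (le_trans (le_max_left _ _) (le_max_right _ _)) hK
  have hK1 : (1:ℝ) ≤ K :=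
    le_of_lt (lt_of_le_of_lt (le_trans (le_max_right _ _) (le_max_right _ _)) hK)
  have hKR : (0:ℝ) < K := by linarith
  have hfl : ∀ (m : ℕ) (i : Fin n),
      0 ≤ ⌊(K : ℝ) * Int.fract ((m : ℝ) * x i)⌋ ∧
      ⌊(K : ℝ) * Int.fract ((m : ℝ) * x i)⌋ < (K : ℤ) := by
    intro m i
    constructor
    · exact Int.floor_nonneg.mpr (mul_nonneg hKR.le (Int.fract_nonneg _))
    · rw [Int.floor_lt]
      push_cast
      nlinarith [Int.fract_lt_one ((m : ℝ) * x i), Int.fract_nonneg ((m : ℝ) * x i)]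
  have hKpos : 0 < K := by exact_mod_cast hKR
  set F : Fin (K ^ n + 1) → (Fin n → Fin K) := fun m i =>
    ⟨(⌊(K : ℝ) * Int.fract ((m : ℕ) * x i)⌋).toNat, by
      have h := hfl m i
      omega⟩ with hFdef
  have hcard : Fintype.card (Fin n → Fin K) < Fintype.card (Fin (K ^ n + 1)) := by
    simp [Fintype.card_fun]
  obtain ⟨m1, m2, hm12, hFeq⟩ := Fintype.exists_ne_map_eq_of_card_lt F hcard
  -- order them
  obtain ⟨a, b, hab, hfe⟩ : ∃ a b : ℕ, a < b ∧ ∀ i,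
      ⌊(K : ℝ) * Int.fract ((a : ℝ) * x i)⌋ = ⌊(K : ℝ) * Int.fract ((b : ℝ) * x i)⌋ := by
    have hfe' : ∀ i, ⌊(K : ℝ) * Int.fract (((m1 : ℕ) : ℝ) * x i)⌋
        = ⌊(K : ℝ) * Int.fract (((m2 : ℕ) : ℝ) * x i)⌋ := by
      intro i
      have h1 := hfl (m1 : ℕ) i
      have h2 := hfl (m2 : ℕ) i
      have := congrFun hFeq i
      simp only [hFdef, Fin.mk.injEq] at this
      omega
    rcases lt_or_gt_of_ne (fun h : (m1 : ℕ) = (m2 : ℕ) => hm12 (Fin.ext h)) with h | h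
    · exact ⟨m1, m2, h, hfe'⟩
    · exact ⟨m2, m1, h, fun i => (hfe' i).symm⟩
  set d : ℕ := b - a with hddef
  have hd1 : 1 ≤ d := by omega
  have hdcast : ((d : ℕ) : ℝ) = (b : ℝ) - (a : ℝ) := by
    rw [hddef]; push_cast [Nat.cast_sub hab.le]; ring
  set v : Fin n → ℤ := fun i => ⌊(b : ℝ) * x i⌋ - ⌊(a : ℝ) * x i⌋ with hvdef
  set e : Fin n → ℝ := fun i => Int.fract ((a : ℝ) * x i) - Int.fract ((b : ℝ) * x i)
    with hedef
  clear_value d v e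
  have he' : ∀ i, |e i| < 1 / K := by
    intro i
    have h := RyshkovAux.abs_sub_lt_one_of_floor_eq (hfe i)
    have : |(K:ℝ) * Int.fract ((a : ℝ) * x i) - (K:ℝ) * Int.fract ((b : ℝ) * x i)|
        = (K:ℝ) * |e i| := by
      rw [hedef, ← mul_sub, abs_mul, abs_of_pos hKR]
    rw [this] at h
    rw [lt_div_iff₀ hKR]
    linarith [mul_comm (K:ℝ) |e i|]
  have he : ∀ i, |e i| ≤ 1 / K := fun i => (he' i).le
  have hveq : (fun i => (v i : ℝ)) = ((d : ℕ) : ℝ) • x + e := by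
    funext i
    have hfa : ((⌊(a : ℝ) * x i⌋ : ℤ) : ℝ) = (a : ℝ) * x i - Int.fract ((a : ℝ) * x i) := by
      rw [Int.self_sub_fract]
    have hfb : ((⌊(b : ℝ) * x i⌋ : ℤ) : ℝ) = (b : ℝ) * x i - Int.fract ((b : ℝ) * x i) := by
      rw [Int.self_sub_fract]
    simp only [hvdef, Pi.add_apply, Pi.smul_apply, smul_eq_mul, hedef]
    push_cast
    rw [hfa, hfb, hdcast]
    ring
  have hK1' : 1 / (K:ℝ) ≤ 1 := by
    rw [div_le_one hKR]; linarith
  have hv0 : ∀ i, 0 ≤ v i := by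
    intro i
    have h2 := congrFun hveq i
    simp only [Pi.add_apply, Pi.smul_apply, smul_eq_mul] at h2
    have h3 : -(1 / (K:ℝ)) < e i := neg_lt_of_abs_lt (he' i)
    have h4 : 0 ≤ ((d:ℕ):ℝ) * x i := mul_nonneg (by positivity) (hx i)
    have h1 : (-1 : ℝ) < (v i : ℝ) := by rw [h2]; linarith
    have h1' : (-1 : ℤ) < v i := by exact_mod_cast h1
    omega
  have hxjK : 1 / (K:ℝ) < x j := by
    rw [div_lt_iff₀ hKR]
    rw [div_lt_iff₀ hj] at hKxj
    linarith [mul_comm (x j) (K:ℝ)]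
  have hvj : 0 < v j := by
    have h2 := congrFun hveq j
    simp only [Pi.add_apply, Pi.smul_apply, smul_eq_mul] at h2
    have h3 : -(1 / (K:ℝ)) < e j := neg_lt_of_abs_lt (he' j)
    have h4 : x j ≤ ((d:ℕ):ℝ) * x j := by
      nlinarith [hj, (by exact_mod_cast hd1 : (1:ℝ) ≤ ((d:ℕ):ℝ))]
    have h1 : (0 : ℝ) < (v j : ℝ) := by rw [h2]; linarith
    exact_mod_cast h1
  have hvne : v ≠ 0 := fun h => by
    have := congrFun h j
    simp only [Pi.zero_apply] at this
    omega
  have hRv := hR v hv0 hvne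
  rw [hveq, RyshkovAux.decomp B hB x e _] at hRv
  have hdot0 : (B.mulVec x) ⬝ᵥ e = 0 := by
    simp only [dotProduct]
    refine Finset.sum_eq_zero fun i _ => ?_
    rcases (hx i).eq_or_lt with h | h
    · have : e i = 0 := by
        simp [hedef, ← h]
      rw [this, mul_zero]
    · rw [hBx i h, zero_mul]
  rw [hQ, hdot0] at hRv
  -- hRv : 1 ≤ d^2 * 0 + 2*d*0 + quadForm B e
  have hQe : |quadForm B e| ≤ C2 * (1 / K) ^ 2 :=
    RyshkovAux.quad_bound B e (1 / K) (by positivity) he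
  have hsmall : C2 * (1 / (K:ℝ)) ^ 2 < 1 := by
    rw [div_pow, one_pow, mul_one_div, div_lt_one (by positivity)]
    nlinarith [hKC2, hK1, hC2]
  have h9 := (abs_le.mp hQe).2
  linarith [hRv, h9, hsmall]
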